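/- arXiv:1704.05323 — 3 statements merged into one kernel-verified Lean document; each statement's English description precedes it below -/
import Mathlib

section
/- Let 0 < θ with θ^{1/Q} < 1/2, r > 0, and let χ be a smooth function with χ(s)=1 for s ≤ θ^{1/Q} r, χ(s)=0 for s > r, 0 ≤ −χ'(s) ≤ 2/((1−θ^{1/Q})r), and χ'(s) < 0 exactly for θ^{1/Q}r < s < r. Define φ₀(x,t) = χ( [ θ² Σ_{i=m₀+1}^{N} x_i²/r^{2α_i−Q} − C₁ t r^{Q−2} ]^{1/Q} ), where C₁ > 1 is chosen so that C₁ r^{Q−2} ≥ θ² | Σ_{i=1}^{N} Σ_{j>m₀} 2 x_i b_{ij} x_j r^{Q−2α_j} | for all z in the region 𝒬 = { (x',x̄,t) : −r² ≤ t < 0, |x'| ≤ r/θ, |x_j| ≤ r^{α_j}/θ for j = m₀+1,…,N }. Then Yφ₀(z) ≤ 0 for all z ∈ 𝒬, where Y = Σ_{i,j=1}^{N} b_{ij} x_i ∂_{x_j} − ∂_t. -/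
open MeasureTheory Matrix Real Filter Topology
open scoped ENNReal NNReal

noncomputable section

/-- Points of `ℝ^{N+1}`, written as pairs `z = (x, t)` with `x ∈ ℝ^N`, `t ∈ ℝ`. -/
abbrev Pt (N : ℕ) := (Fin N → ℝ) × ℝ

namespace Ultra

variable {N : ℕ}

/-- Partial sums of the block sizes: `off m k = m 0 + ⋯ + m (k-1)`. -/
def off (m : ℕ → ℕ) (k : ℕ) : ℕ := ∑ l ∈ Finset.range k, m l

/-- The index of the block containing coordinate `i`. -/
def blockOf (m : ℕ → ℕ) (i : ℕ) : ℕ := Nat.findGreatest (fun k => off m k ≤ i) i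

/-- The anisotropic dilation exponent `α_i = 2k+1` for `i` in the `k`-th block. -/
def alphaExp (m : ℕ → ℕ) (i : ℕ) : ℕ := 2 * blockOf m i + 1

/-- `Q = m₀ + 3 m₁ + ⋯ + (2d+1) m_d`;  `Q + 2` is the homogeneous dimension. -/
def Qdim (d : ℕ) (m : ℕ → ℕ) : ℕ := ∑ k ∈ Finset.range (d + 1), (2 * k + 1) * m k

/-- Entries of an `N × N` matrix, reindexed over `ℕ` (zero outside the range). -/
def entry (B : Matrix (Fin N) (Fin N) ℝ) (i j : ℕ) : ℝ :=
  if hi : i < N then (if hj : j < N then B ⟨i, hi⟩ ⟨j, hj⟩ else 0) else 0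

/-- The `k`-th block-superdiagonal block `B_k` of `B`, of size `m (k-1) × m k`. -/
def sdBlock (B : Matrix (Fin N) (Fin N) ℝ) (m : ℕ → ℕ) (k : ℕ) :
    Matrix (Fin (m (k - 1))) (Fin (m k)) ℝ :=
  Matrix.of fun i j => entry B (off m (k - 1) + (i : ℕ)) (off m k + (j : ℕ))

/-- Hypothesis (H2): block structure of the drift matrix `B`. -/
structure H2 (d : ℕ) (m : ℕ → ℕ) (B : Matrix (Fin N) (Fin N) ℝ) : Prop where
  m_pos : ∀ k ≤ d, 1 ≤ m k
  m_mono : ∀ k < d, m (k + 1) ≤ m k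
  m_zero : ∀ k, d < k → m k = 0
  m_sum : off m (d + 1) = N
  upper_zero : ∀ i j : Fin N, blockOf m (i : ℕ) + 1 < blockOf m (j : ℕ) → B i j = 0
  rank_sd : ∀ k, 1 ≤ k → k ≤ d → (sdBlock B m k).rank = m k

/-- Frobenius norm of a matrix (a choice of matrix norm). -/
def frobNorm (B : Matrix (Fin N) (Fin N) ℝ) : ℝ := Real.sqrt (∑ i, ∑ j, B i j ^ 2)

/-- `E(τ) = exp(-τ Bᵀ)`. -/
def Emat (B : Matrix (Fin N) (Fin N) ℝ) (τ : ℝ) : Matrix (Fin N) (Fin N) ℝ :=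
  NormedSpace.exp ((-τ) • Bᵀ)

/-- The Lie group operation `(x,t) ∘ (ξ,τ) = (ξ + E(τ) x, t + τ)`. -/
def gmul (B : Matrix (Fin N) (Fin N) ℝ) (z w : Pt N) : Pt N :=
  (w.1 + (Emat B w.2).mulVec z.1, z.2 + w.2)

/-- The group inverse `(x,t)⁻¹ = (-E(-t) x, -t)`. -/
def ginv (B : Matrix (Fin N) (Fin N) ℝ) (z : Pt N) : Pt N :=
  (-(Emat B (-z.2)).mulVec z.1, -z.2)

/-- The anisotropic norm `‖(x,t)‖`: the unique `r > 0` with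
`Σ x_i² / r^{2α_i} + t² / r⁴ = 1` for `z ≠ 0`, and `0` at the origin
(realised here as the infimum of admissible radii). -/
def anorm (m : ℕ → ℕ) (z : Pt N) : ℝ :=
  sInf {r : ℝ | 0 < r ∧ (∑ i, z.1 i ^ 2 / r ^ (2 * alphaExp m (i : ℕ))) + z.2 ^ 2 / r ^ 4 ≤ 1}

/-- The lower ball `B_r⁻(z₀) = {z : ‖z₀⁻¹ ∘ z‖ ≤ r, t < t₀}`. -/
def ballNeg (B : Matrix (Fin N) (Fin N) ℝ) (m : ℕ → ℕ) (z₀ : Pt N) (r : ℝ) : Set (Pt N) :=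
  {z | anorm m (gmul B (ginv B z₀) z) ≤ r ∧ z.2 < z₀.2}

/-- The `i`-th spatial coordinate direction in `ℝ^{N+1}`. -/
def e1 (i : Fin N) : Pt N := (Pi.single i 1, 0)

/-- The time direction in `ℝ^{N+1}`. -/
def et : Pt N := (0, 1)

/-- Test functions on `Ω`: smooth, compactly supported inside `Ω`. -/
def IsTest (Ω : Set (Pt N)) (φ : Pt N → ℝ) : Prop :=
  ContDiff ℝ (⊤ : ℕ∞) φ ∧ HasCompactSupport φ ∧ tsupport φ ⊆ Ω

/-- `g` is the weak derivative `∂_{x_i} u` on `Ω`. -/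
def IsWeakDeriv (Ω : Set (Pt N)) (u g : Pt N → ℝ) (i : Fin N) : Prop :=
  ∀ φ : Pt N → ℝ, IsTest Ω φ →
    ∫ z in Ω, u z * fderiv ℝ φ z (e1 i) = -∫ z in Ω, g z * φ z

/-- The drift operator `Y = Σ b_{ij} x_i ∂_{x_j} - ∂_t` applied to a smooth function. -/
def Yop (B : Matrix (Fin N) (Fin N) ℝ) (φ : Pt N → ℝ) (z : Pt N) : ℝ :=
  (∑ i, ∑ j, B i j * z.1 i * fderiv ℝ φ z (e1 j)) - fderiv ℝ φ z et

/-- `g = Yu` in the weak sense on `Ω` (integrating by parts against the drift field). -/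
def IsWeakY (Ω : Set (Pt N)) (B : Matrix (Fin N) (Fin N) ℝ) (u g : Pt N → ℝ) : Prop :=
  ∀ φ : Pt N → ℝ, IsTest Ω φ →
    ∫ z in Ω, g z * φ z =
      -(∫ z in Ω, u z * Yop B φ z) - Matrix.trace B * ∫ z in Ω, u z * φ z

/-- Local square integrability on `Ω`. -/
def L2loc (Ω : Set (Pt N)) (g : Pt N → ℝ) : Prop :=
  ∀ K : Set (Pt N), K ⊆ Ω → IsCompact K → MemLp g 2 (volume.restrict K)

/-- Euclidean norm of a vector in `ℝ^N`. -/
def vecNorm (b : Fin N → ℝ) : ℝ := Real.sqrt (∑ i, b i ^ 2)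

/-- Euclidean norm of the first `m₀` components `x' = (x_1, …, x_{m₀})`. -/
def vecNormLt (m₀ : ℕ) (b : Fin N → ℝ) : ℝ :=
  Real.sqrt (∑ i ∈ Finset.univ.filter (fun i : Fin N => (i : ℕ) < m₀), b i ^ 2)

/-- `(eLpNorm)` based `L^q` norm (real exponent `q`) over a set. -/
def LqNorm (S : Set (Pt N)) (g : Pt N → ℝ) (q : ℝ) : ℝ :=
  (eLpNorm g (ENNReal.ofReal q) (volume.restrict S)).toReal

/-- `L^∞` norm over a set. -/
def LinfNorm (S : Set (Pt N)) (g : Pt N → ℝ) : ℝ :=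
  (eLpNorm g ⊤ (volume.restrict S)).toReal

/-- Hypothesis (H1): symmetry, boundedness, degeneracy outside the first `m₀`
coordinates, and `λ`-ellipticity on `ℝ^{m₀}`. -/
structure H1 (m₀ : ℕ) (lam : ℝ) (a : Pt N → Matrix (Fin N) (Fin N) ℝ) : Prop where
  symm : ∀ z i j, a z i j = a z j i
  degenerate : ∀ z, ∀ i j : Fin N, m₀ ≤ (i : ℕ) ∨ m₀ ≤ (j : ℕ) → a z i j = 0
  meas : ∀ i j, Measurable fun z => a z i j
  bdd : ∃ M : ℝ, ∀ z i j, |a z i j| ≤ M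
  elliptic_lower : ∀ z (ξ : Fin N → ℝ), (∀ i : Fin N, m₀ ≤ (i : ℕ) → ξ i = 0) →
    lam⁻¹ * ∑ i, ξ i ^ 2 ≤ ∑ i, ∑ j, a z i j * ξ i * ξ j
  elliptic_upper : ∀ z (ξ : Fin N → ℝ), (∀ i : Fin N, m₀ ≤ (i : ℕ) → ξ i = 0) →
    ∑ i, ∑ j, a z i j * ξ i * ξ j ≤ lam * ∑ i, ξ i ^ 2

/-- Hypothesis (H3): integrability of the lower order coefficients. -/
structure H3 (m₀ : ℕ) (Ω : Set (Pt N)) (Q : ℕ) (q : ℝ)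
    (b' : Pt N → Fin N → ℝ) (c f : Pt N → ℝ) : Prop where
  q_big : ((Q : ℝ) + 2) / 2 < q
  c_mem : MemLp c (ENNReal.ofReal q) (volume.restrict Ω)
  f_mem : MemLp f (ENNReal.ofReal q) (volume.restrict Ω)
  b_mem : MemLp (fun z => vecNorm (b' z)) ((Q : ℝ≥0∞) + 2) (volume.restrict Ω)
  b_degenerate : ∀ z, ∀ i : Fin N, m₀ ≤ (i : ℕ) → b' z i = 0

/-- `u` is a weak solution of `Lu = b'·D_{m₀}u + cu + f` in `Ω`, with weak spatial
derivatives `Du` (vanishing beyond the first `m₀` components) and weak drift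
derivative `Yu`. -/
structure IsWeakSol (m₀ : ℕ) (Ω : Set (Pt N)) (a : Pt N → Matrix (Fin N) (Fin N) ℝ)
    (B : Matrix (Fin N) (Fin N) ℝ) (b' : Pt N → Fin N → ℝ) (c f : Pt N → ℝ)
    (u : Pt N → ℝ) (Du : Pt N → Fin N → ℝ) (Yu : Pt N → ℝ) : Prop where
  du_weak : ∀ i : Fin N, (i : ℕ) < m₀ → IsWeakDeriv Ω u (fun z => Du z i) i
  du_zero : ∀ z, ∀ i : Fin N, m₀ ≤ (i : ℕ) → Du z i = 0
  yu_weak : IsWeakY Ω B u Yu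
  u_loc : L2loc Ω u
  du_loc : L2loc Ω fun z => vecNorm (Du z)
  yu_loc : L2loc Ω Yu
  b_loc : L2loc Ω fun z => vecNorm (b' z)
  c_loc : L2loc Ω c
  f_loc : L2loc Ω f
  eqn : ∀ φ : Pt N → ℝ, IsTest Ω φ →
    (∫ z in Ω, (φ z * Yu z - ∑ i, ∑ j, a z i j * Du z j * fderiv ℝ φ z (e1 i))) =
      ∫ z in Ω, φ z * ((∑ i, b' z i * Du z i) + c z * u z + f z)

/-- `u` is a weak sub-solution of `Lu = b'·D_{m₀}u + cu + f` in `Ω`. -/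
structure IsWeakSubSol (m₀ : ℕ) (Ω : Set (Pt N)) (a : Pt N → Matrix (Fin N) (Fin N) ℝ)
    (B : Matrix (Fin N) (Fin N) ℝ) (b' : Pt N → Fin N → ℝ) (c f : Pt N → ℝ)
    (u : Pt N → ℝ) (Du : Pt N → Fin N → ℝ) (Yu : Pt N → ℝ) : Prop where
  du_weak : ∀ i : Fin N, (i : ℕ) < m₀ → IsWeakDeriv Ω u (fun z => Du z i) i
  du_zero : ∀ z, ∀ i : Fin N, m₀ ≤ (i : ℕ) → Du z i = 0
  yu_weak : IsWeakY Ω B u Yu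
  u_loc : L2loc Ω u
  du_loc : L2loc Ω fun z => vecNorm (Du z)
  yu_loc : L2loc Ω Yu
  b_loc : L2loc Ω fun z => vecNorm (b' z)
  c_loc : L2loc Ω c
  f_loc : L2loc Ω f
  eqn : ∀ φ : Pt N → ℝ, IsTest Ω φ → (∀ z, 0 ≤ φ z) →
    (∫ z in Ω, (φ z * Yu z - ∑ i, ∑ j, a z i j * Du z j * fderiv ℝ φ z (e1 i))) ≥
      ∫ z in Ω, φ z * ((∑ i, b' z i * Du z i) + c z * u z + f z)

/-- A Kruzhkov G-function. -/
structure IsGFun (G : ℝ → ℝ) : Prop where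
  smooth : ContDiffOn ℝ (⊤ : ℕ∞) G (Set.Ioi 0)
  nonneg : ∀ t : ℝ, 0 < t → 0 ≤ G t
  convex_ineq : ∀ t : ℝ, 0 < t → deriv G t ^ 2 ≤ deriv (deriv G) t
  deriv_nonpos : ∀ t : ℝ, 0 < t → deriv G t ≤ 0
  eventually_zero : ∀ t : ℝ, 1 ≤ t → G t = 0
  log_asymp : Tendsto (fun t => G t / (-Real.log t)) (nhdsWithin 0 (Set.Ioi 0)) (nhds 1)
  deriv_bound : ∀ t : ℝ, 0 < t → t ≤ 1 / 4 → -deriv G t ≤ 1 / t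

/-- The constant matrix `A₀ = diag(I_{m₀}, 0)`. -/
def A0 (N m₀ : ℕ) : Matrix (Fin N) (Fin N) ℝ :=
  Matrix.diagonal fun i => if (i : ℕ) < m₀ then (1 : ℝ) else 0

/-- `C(t) = ∫₀ᵗ E(s) A₀ E(s)ᵀ ds`. -/
def Cmat (m₀ : ℕ) (B : Matrix (Fin N) (Fin N) ℝ) (t : ℝ) : Matrix (Fin N) (Fin N) ℝ :=
  Matrix.of fun i j => ∫ s in (0:ℝ)..t, (Emat B s * A0 N m₀ * (Emat B s)ᵀ) i j

/-- Quadratic form `⟨M x, x⟩`. -/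
def quadForm (M : Matrix (Fin N) (Fin N) ℝ) (x : Fin N → ℝ) : ℝ :=
  dotProduct x (M.mulVec x)

/-- The fundamental solution with pole at the origin. -/
def Gamma0 (m₀ : ℕ) (B : Matrix (Fin N) (Fin N) ℝ) (z : Pt N) : ℝ :=
  if 0 < z.2 then
    (4 * π) ^ (-(N : ℝ) / 2) * Matrix.det (Cmat m₀ B z.2) ^ (-(1 : ℝ) / 2) *
      Real.exp (-(1 / 4) * quadForm (Cmat m₀ B z.2)⁻¹ z.1 - z.2 * Matrix.trace B)
  else 0

/-- The fundamental solution `Γ₁(z, ζ) = Γ₁(ζ⁻¹ ∘ z, 0)` of `L₁ = div(A₀ D) + Y`. -/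
def Gamma1 (m₀ : ℕ) (B : Matrix (Fin N) (Fin N) ℝ) (z ζ : Pt N) : ℝ :=
  Gamma0 m₀ B (gmul B (ginv B ζ) z)

/-- The spatial dilation matrix `D_s = diag(s I_{m₀}, s³ I_{m₁}, …, s^{2d+1} I_{m_d})`. -/
def dilMat (m : ℕ → ℕ) (s : ℝ) : Matrix (Fin N) (Fin N) ℝ :=
  Matrix.diagonal fun i : Fin N => s ^ alphaExp m (i : ℕ)

/-- The region `𝒬` used for the cutoff `φ₀`. -/
def Qregion (m₀ : ℕ) (m : ℕ → ℕ) (θ r : ℝ) : Set (Pt N) :=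
  {z | -r ^ 2 ≤ z.2 ∧ z.2 < 0 ∧ vecNormLt m₀ z.1 ≤ r / θ ∧
    ∀ j : Fin N, m₀ ≤ (j : ℕ) → |z.1 j| ≤ r ^ (alphaExp m (j : ℕ)) / θ}

/-- The cutoff `φ₀(x,t) = χ([θ² Σ_{i>m₀} x_i²/r^{2α_i-Q} - C₁ t r^{Q-2}]^{1/Q})`. -/
def phi0 (m₀ Qd : ℕ) (m : ℕ → ℕ) (χ : ℝ → ℝ) (θ r C₁ : ℝ) (z : Pt N) : ℝ :=
  χ ((θ ^ 2 * (∑ j ∈ Finset.univ.filter (fun j : Fin N => m₀ ≤ (j : ℕ)),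
        z.1 j ^ 2 / r ^ (2 * (alphaExp m (j : ℕ) : ℝ) - Qd)) -
      C₁ * z.2 * r ^ ((Qd : ℝ) - 2)) ^ ((1 : ℝ) / Qd))

/-- The cutoff `φ₁(x,t) = χ(θ |x'|)`. -/
def phi1 (m₀ : ℕ) (χ : ℝ → ℝ) (θ : ℝ) (z : Pt N) : ℝ := χ (θ * vecNormLt m₀ z.1)

/-- The full cutoff `φ = φ₀ φ₁`. -/
def phiCut (m₀ Qd : ℕ) (m : ℕ → ℕ) (χ : ℝ → ℝ) (θ r C₁ : ℝ) (z : Pt N) : ℝ :=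
  phi0 m₀ Qd m χ θ r C₁ z * phi1 m₀ χ θ z

/-- The boundary potential term `I₁(z)` of the weak Poincaré inequality. -/
def I1fun (m₀ Qd : ℕ) (m : ℕ → ℕ) (B : Matrix (Fin N) (Fin N) ℝ) (χ : ℝ → ℝ)
    (θ r C₁ : ℝ) (wf : Pt N → ℝ) (z : Pt N) : ℝ :=
  ∫ ζ in ballNeg B m (0, 0) (r / θ),
    ((∑ i, ∑ j, A0 N m₀ i j * (phi1 m₀ χ θ ζ * fderiv ℝ (phi0 m₀ Qd m χ θ r C₁) ζ (e1 j)) *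
        fderiv ℝ (fun w => Gamma1 m₀ B z w) ζ (e1 i)) * wf ζ -
      Gamma1 m₀ B z ζ * wf ζ * Yop B (phiCut m₀ Qd m χ θ r C₁) ζ)

/-- The boundary potential term `C₂(z)` of the weak Poincaré inequality. -/
def C2fun (m₀ Qd : ℕ) (m : ℕ → ℕ) (B : Matrix (Fin N) (Fin N) ℝ) (χ : ℝ → ℝ)
    (θ r C₁ : ℝ) (wf : Pt N → ℝ) (z : Pt N) : ℝ :=
  ∫ ζ in ballNeg B m (0, 0) (r / θ),
    (∑ i, ∑ j, A0 N m₀ i j * (phi0 m₀ Qd m χ θ r C₁ ζ * fderiv ℝ (phi1 m₀ χ θ) ζ (e1 j)) *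
        fderiv ℝ (fun w => Gamma1 m₀ B z w) ζ (e1 i)) * wf ζ

/-- `I₀ = max_{z ∈ B⁻_{θr}} (I₁(z) + C₂(z))`. -/
def I0val (m₀ Qd : ℕ) (m : ℕ → ℕ) (B : Matrix (Fin N) (Fin N) ℝ) (χ : ℝ → ℝ)
    (θ r C₁ : ℝ) (wf : Pt N → ℝ) : ℝ :=
  sSup ((fun z => I1fun m₀ Qd m B χ θ r C₁ wf z + C2fun m₀ Qd m B χ θ r C₁ wf z) ''
    ballNeg B m (0, 0) (θ * r))

/-- The cube `C_r⁻` (equivalent to `B_r⁻` up to a structural constant). -/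
def cubeNeg (N m₀ : ℕ) (m : ℕ → ℕ) (lam r : ℝ) : Set (Pt N) :=
  {z | -r ^ 2 ≤ z.2 ∧ z.2 ≤ 0 ∧ vecNormLt m₀ z.1 ≤ r ∧
    ∀ j : Fin N, m₀ ≤ (j : ℕ) → |z.1 j| ≤ (lam * r) ^ alphaExp m (j : ℕ)}

/-- The slice `K_r × S_r ⊂ ℝ^N`. -/
def KS (N m₀ : ℕ) (m : ℕ → ℕ) (lam r : ℝ) : Set (Fin N → ℝ) :=
  {x | vecNormLt m₀ x ≤ r ∧
    ∀ j : Fin N, m₀ ≤ (j : ℕ) → |x j| ≤ (lam * r) ^ alphaExp m (j : ℕ)}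

end Ultra

open Ultra

/-- `Y φ₀ ≤ 0` on the region `𝒬` (Lemma 3.2(b) in
Wang–Zhang / Remark 3.1 setup). -/
theorem Y_phi0_nonpos
    (N m₀ d : ℕ) (m : ℕ → ℕ) (lam : ℝ)
    (hm₀ : 1 ≤ m₀) (hm₀N : m₀ ≤ N) (hm0 : m 0 = m₀) (hlam : 0 < lam)
    (B : Matrix (Fin N) (Fin N) ℝ) (hB2 : H2 d m B) (hBn : frobNorm B ≤ lam)
    (θ r C₁ : ℝ) (hθ : 0 < θ) (hθ2 : θ ^ ((1:ℝ) / Qdim d m) < 1 / 2) (hr : 0 < r)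
    (χ : ℝ → ℝ) (hχs : ContDiff ℝ (⊤ : ℕ∞) χ)
    (hχ1 : ∀ s : ℝ, s ≤ θ ^ ((1:ℝ) / Qdim d m) * r → χ s = 1)
    (hχ0 : ∀ s : ℝ, r < s → χ s = 0)
    (hχd : ∀ s : ℝ, 0 ≤ -deriv χ s ∧ -deriv χ s ≤ 2 / ((1 - θ ^ ((1:ℝ) / Qdim d m)) * r))
    (hχneg : ∀ s : ℝ, deriv χ s < 0 ↔ (θ ^ ((1:ℝ) / Qdim d m) * r < s ∧ s < r))
    (hC₁ : 1 < C₁)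
    (hC₁' : ∀ z ∈ Qregion (N := N) m₀ m θ r,
      θ ^ 2 * |∑ i : Fin N, ∑ j ∈ Finset.univ.filter (fun j : Fin N => m₀ ≤ (j : ℕ)),
        2 * z.1 i * B i j * z.1 j * r ^ ((Qdim d m : ℝ) - 2 * alphaExp m (j : ℕ))| ≤
        C₁ * r ^ ((Qdim d m : ℝ) - 2)) :
    ∀ z ∈ Qregion (N := N) m₀ m θ r, Yop B (phi0 m₀ (Qdim d m) m χ θ r C₁) z ≤ 0 := by
  intro z hz
  have hQ1 : 1 ≤ Qdim d m := by
    have h0 : (2*0+1) * m 0 ≤ Qdim d m :=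
      Finset.single_le_sum (f := fun k => (2*k+1) * m k) (fun k _ => Nat.zero_le _)
        (Finset.mem_range.mpr (Nat.succ_pos d))
    simp only [Nat.mul_zero, Nat.zero_add, Nat.one_mul, hm0] at h0
    exact le_trans hm₀ h0
  have hQR : (0:ℝ) < (Qdim d m : ℝ) := by exact_mod_cast hQ1
  set q1 : ℝ := (1:ℝ) / (Qdim d m : ℝ) with hq1def
  set S : Finset (Fin N) := Finset.univ.filter (fun j : Fin N => m₀ ≤ (j:ℕ)) with hS
  set c : Fin N → ℝ := fun j => r ^ (2 * (alphaExp m (j:ℕ) : ℝ) - (Qdim d m : ℝ)) with hc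
  have hcpos : ∀ j, 0 < c j := fun j => Real.rpow_pos_of_pos hr _
  set q2 : ℝ := r ^ ((Qdim d m : ℝ) - 2) with hq2
  have hq2pos : 0 < q2 := Real.rpow_pos_of_pos hr _
  set g : Pt N → ℝ := fun w =>
    θ ^ 2 * (∑ j ∈ S, w.1 j ^ 2 / c j) - C₁ * w.2 * q2 with hgdef
  -- positivity of g z
  have hSig : 0 ≤ ∑ j ∈ S, z.1 j ^ 2 / c j :=
    Finset.sum_nonneg fun j _ => div_nonneg (sq_nonneg _) (hcpos j).le
  have ht : z.2 < 0 := hz.2.1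
  have hgz : 0 < g z := by
    have h1 : C₁ * z.2 * q2 < 0 :=
      mul_neg_of_neg_of_pos (mul_neg_of_pos_of_neg (lt_trans one_pos hC₁) ht) hq2pos
    have h2 : 0 ≤ θ ^ 2 * (∑ j ∈ S, z.1 j ^ 2 / c j) := mul_nonneg (sq_nonneg θ) hSig
    simp only [hgdef]
    linarith
  -- derivative of g
  set Pj : Fin N → (Pt N →L[ℝ] ℝ) := fun j =>
    (ContinuousLinearMap.proj j).comp (ContinuousLinearMap.fst ℝ (Fin N → ℝ) ℝ) with hPj
  have hcoord : ∀ j : Fin N, HasFDerivAt (fun w : Pt N => w.1 j) (Pj j) z :=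
    fun j => (Pj j).hasFDerivAt
  have hjd : ∀ j : Fin N,
      HasFDerivAt (fun w : Pt N => w.1 j ^ 2 / c j)
        (((2:ℝ) * z.1 j ^ 1 / c j) • Pj j) z := by
    intro j
    have houter : HasDerivAt (fun s : ℝ => s ^ 2 / c j) ((2:ℝ) * z.1 j ^ 1 / c j) (z.1 j) := by
      have := (hasDerivAt_pow 2 (z.1 j)).div_const (c j)
      simpa using this
    exact houter.comp_hasFDerivAt z (hcoord j)
  have hsum : HasFDerivAt (fun w : Pt N => ∑ j ∈ S, w.1 j ^ 2 / c j)
      (∑ j ∈ S, ((2:ℝ) * z.1 j ^ 1 / c j) • Pj j) z :=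
    HasFDerivAt.fun_sum (fun j _ => hjd j)
  have h1 := hsum.const_mul (θ ^ 2)
  have hsnd : HasFDerivAt (fun w : Pt N => C₁ * w.2 * q2)
      (q2 • (C₁ • ContinuousLinearMap.snd ℝ (Fin N → ℝ) ℝ)) z := by
    have h0 : HasFDerivAt (fun w : Pt N => w.2)
        (ContinuousLinearMap.snd ℝ (Fin N → ℝ) ℝ) z :=
      (ContinuousLinearMap.snd ℝ (Fin N → ℝ) ℝ).hasFDerivAt
    exact (h0.const_mul C₁).mul_const q2
  set L : Pt N →L[ℝ] ℝ :=
    (θ ^ 2) • (∑ j ∈ S, ((2:ℝ) * z.1 j ^ 1 / c j) • Pj j) -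
      q2 • (C₁ • ContinuousLinearMap.snd ℝ (Fin N → ℝ) ℝ) with hL
  have hgd : HasFDerivAt g L z := h1.sub hsnd
  -- values of L
  have hLe : ∀ i : Fin N,
      L (e1 i) = if m₀ ≤ (i:ℕ) then θ ^ 2 * ((2:ℝ) * z.1 i ^ 1 / c i) else 0 := by
    intro i
    simp only [hL, hPj, e1, ContinuousLinearMap.sub_apply, ContinuousLinearMap.smul_apply,
      ContinuousLinearMap.sum_apply, ContinuousLinearMap.comp_apply,
      ContinuousLinearMap.coe_fst', ContinuousLinearMap.coe_snd', ContinuousLinearMap.proj_apply,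
      smul_eq_mul, mul_zero, sub_zero]
    rw [Finset.mul_sum]
    have : ∀ j ∈ S, θ ^ 2 * ((2:ℝ) * z.1 j ^ 1 / c j * (Pi.single i (1:ℝ) : Fin N → ℝ) j) =
        if j = i then θ ^ 2 * ((2:ℝ) * z.1 j ^ 1 / c j) else 0 := by
      intro j _
      rcases eq_or_ne j i with h | h
      · subst h; rw [if_pos rfl, Pi.single_eq_same, mul_one]
      · rw [if_neg h, Pi.single_eq_of_ne h, mul_zero, mul_zero]
    rw [Finset.sum_congr rfl this, Finset.sum_ite_eq' S i
      (fun j => θ ^ 2 * ((2:ℝ) * z.1 j ^ 1 / c j))]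
    simp [hS]
  have hLt : L et = -(C₁ * q2) := by
    simp only [hL, hPj, et, ContinuousLinearMap.sub_apply, ContinuousLinearMap.smul_apply,
      ContinuousLinearMap.sum_apply, ContinuousLinearMap.comp_apply,
      ContinuousLinearMap.coe_fst', ContinuousLinearMap.coe_snd', ContinuousLinearMap.proj_apply,
      smul_eq_mul, Pi.zero_apply, mul_zero, Finset.sum_const_zero, mul_one]
    ring
  -- derivative of phi0
  have hp : HasDerivAt (fun s : ℝ => s ^ q1) (q1 * g z ^ (q1 - 1)) (g z) :=
    Real.hasDerivAt_rpow_const (Or.inl hgz.ne')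
  have hχd' : HasDerivAt χ (deriv χ (g z ^ q1)) (g z ^ q1) :=
    ((hχs.differentiable (by simp)) _).hasDerivAt
  have hcomp : HasDerivAt (fun s : ℝ => χ (s ^ q1))
      (deriv χ (g z ^ q1) * (q1 * g z ^ (q1 - 1))) (g z) :=
    HasDerivAt.comp (g z) hχd' hp
  set k : ℝ := deriv χ (g z ^ q1) * (q1 * g z ^ (q1 - 1)) with hk
  have hphi0 : HasFDerivAt (phi0 m₀ (Qdim d m) m χ θ r C₁) (k • L) z :=
    hcomp.comp_hasFDerivAt z hgd
  have hfd : fderiv ℝ (phi0 m₀ (Qdim d m) m χ θ r C₁) z = k • L := hphi0.fderiv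
  rw [Yop, hfd]
  simp only [ContinuousLinearMap.smul_apply, smul_eq_mul, hLt]
  -- rearrange
  set T : ℝ := ∑ i : Fin N, ∑ j ∈ S,
      2 * z.1 i * B i j * z.1 j * r ^ ((Qdim d m : ℝ) - 2 * (alphaExp m (j:ℕ) : ℝ)) with hT
  have hsum2 : (∑ i : Fin N, ∑ j : Fin N, B i j * z.1 i * L (e1 j)) = θ ^ 2 * T := by
    rw [hT, Finset.mul_sum]
    refine Finset.sum_congr rfl fun i _ => ?_
    rw [Finset.mul_sum]
    have step1 : (∑ j : Fin N, B i j * z.1 i * L (e1 j)) =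
        ∑ j : Fin N, (if m₀ ≤ (j:ℕ) then B i j * z.1 i * (θ ^ 2 * ((2:ℝ) * z.1 j ^ 1 / c j)) else 0) := by
      refine Finset.sum_congr rfl fun j _ => ?_
      rw [hLe j]
      split <;> simp
    rw [step1, ← Finset.sum_filter, ← hS]
    refine Finset.sum_congr rfl fun j hj => ?_
    have hcinv : (c j)⁻¹ = r ^ ((Qdim d m : ℝ) - 2 * (alphaExp m (j:ℕ) : ℝ)) := by
      rw [hc, ← Real.rpow_neg hr.le, neg_sub]
    rw [div_eq_mul_inv, hcinv]
    ring
  have hmain : (∑ i : Fin N, ∑ j : Fin N, B i j * z.1 i * (k * L (e1 j))) - k * -(C₁ * q2) =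
      k * ((∑ i : Fin N, ∑ j : Fin N, B i j * z.1 i * L (e1 j)) + C₁ * q2) := by
    have h' : ∀ i j : Fin N, B i j * z.1 i * (k * L (e1 j)) =
        k * (B i j * z.1 i * L (e1 j)) := fun i j => by ring
    simp_rw [h', ← Finset.mul_sum]
    ring
  rw [hmain, hsum2]
  -- sign analysis
  have hbound := hC₁' z hz
  rw [← hT] at hbound
  have hTabs : -(θ ^ 2 * T) ≤ θ ^ 2 * |T| := by
    have := neg_abs_le (θ ^ 2 * T)
    rw [abs_mul, abs_of_nonneg (sq_nonneg θ)] at this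
    linarith
  have hpos : 0 ≤ θ ^ 2 * T + C₁ * q2 := by linarith
  have hknp : k ≤ 0 := by
    have h1 : deriv χ (g z ^ q1) ≤ 0 := by
      have := (hχd (g z ^ q1)).1; linarith
    have h2 : 0 ≤ q1 * g z ^ (q1 - 1) :=
      mul_nonneg (by positivity) (Real.rpow_nonneg hgz.le _)
    exact mul_nonpos_of_nonpos_of_nonneg h1 h2
  exact mul_nonpos_of_nonpos_of_nonneg hknp hpos
end
end

section
/- Let B be a constant real N×N matrix satisfying (H2), E(s) = exp(−sBᵀ), A₀ = diag(I_{m₀}, 0) (the N×N matrix with identity in the upper-left m₀×m₀ block and zeros elsewhere), and C(t) = ∫₀ᵗ E(s) A₀ E(s)ᵀ ds. Then C(t) is a symmetric positive definite matrix for every t > 0. -/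
open MeasureTheory Matrix Real Filter Topology
open scoped ENNReal NNReal

noncomputable section

open Ultra

section Aux

variable {N : ℕ} {m : ℕ → ℕ} {d : ℕ}

lemma off_zero (m : ℕ → ℕ) : off m 0 = 0 := by simp [off]

lemma off_succ (m : ℕ → ℕ) (k : ℕ) : off m (k + 1) = off m k + m k :=
  Finset.sum_range_succ m k

lemma off_mono (m : ℕ → ℕ) : Monotone (off m) := by
  intro a b hab
  exact Finset.sum_le_sum_of_subset (Finset.range_subset_range.2 hab)

lemma le_off (hpos : ∀ l, l < k → 1 ≤ m l) : k ≤ off m k := by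
  calc k = ∑ _l ∈ Finset.range k, 1 := by simp
  _ ≤ off m k := Finset.sum_le_sum fun l hl => hpos l (Finset.mem_range.1 hl)

/-- The block decomposition of an index `i < off m (d+1)`. -/
lemma blockOf_spec (hpos : ∀ l, l ≤ d → 1 ≤ m l) {i : ℕ} (hi : i < off m (d + 1)) :
    blockOf m i ≤ d ∧ off m (blockOf m i) ≤ i ∧ i < off m (blockOf m i + 1) := by
  have hP : off m (blockOf m i) ≤ i :=
    Nat.findGreatest_spec (P := fun k => off m k ≤ i) (Nat.zero_le i) (by simp [off_zero])
  have hle : blockOf m i ≤ d := by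
    by_contra h
    push_neg at h
    exact absurd (le_trans (off_mono m h) hP) (not_le.2 hi)
  refine ⟨hle, hP, ?_⟩
  by_contra h
  push_neg at h
  have h1 : blockOf m i + 1 ≤ i := le_trans (le_off (fun l hl => hpos l (by omega))) h
  have := Nat.le_findGreatest (P := fun k => off m k ≤ i) h1 h
  simp only [blockOf] at this
  omega

lemma blockOf_eq (hpos : ∀ l, l ≤ d → 1 ≤ m l) {k i : ℕ} (hk : k ≤ d)
    (h1 : off m k ≤ i) (h2 : i < off m (k + 1)) : blockOf m i = k := by
  have hi : i < off m (d + 1) := lt_of_lt_of_le h2 (off_mono m (by omega))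
  obtain ⟨hle, hP, hlt⟩ := blockOf_spec hpos hi
  rcases lt_trichotomy (blockOf m i) k with h | h | h
  · have : off m (blockOf m i + 1) ≤ off m k := off_mono m h
    omega
  · exact h
  · have : off m (k + 1) ≤ off m (blockOf m i) := off_mono m h
    omega

lemma inj_of_rank {a b : ℕ} (A : Matrix (Fin a) (Fin b) ℝ) (h : A.rank = b) :
    Function.Injective A.mulVec := by
  have hrn := LinearMap.finrank_range_add_finrank_ker A.mulVecLin
  rw [Matrix.rank] at h
  have hdom : Module.finrank ℝ (Fin b → ℝ) = b := by simp
  rw [hdom, h] at hrn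
  have hker : Module.finrank ℝ (LinearMap.ker A.mulVecLin) = 0 := by omega
  have : LinearMap.ker A.mulVecLin = ⊥ := Submodule.finrank_eq_zero.1 hker
  have hinj := LinearMap.ker_eq_bot.1 this
  intro u v huv
  exact hinj (by simpa [Matrix.mulVecLin_apply] using huv)

end Aux

section Main

variable {N : ℕ} {m : ℕ → ℕ} {d : ℕ} {B : Matrix (Fin N) (Fin N) ℝ}

def Mprod (B : Matrix (Fin N) (Fin N) ℝ) (m : ℕ → ℕ) : (k : ℕ) → Matrix (Fin (m 0)) (Fin (m k)) ℝ
  | 0 => 1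
  | k + 1 => Mprod B m k *
      (show Matrix (Fin (m k)) (Fin (m (k + 1))) ℝ from sdBlock B m (k + 1))

lemma off_add_lt (hpos : ∀ l, l ≤ d → 1 ≤ m l) (hsum : off m (d + 1) = N)
    {k : ℕ} (hk : k ≤ d) {a : ℕ} (ha : a < m k) : off m k + a < N := by
  have h1 : off m (k + 1) = off m k + m k := off_succ m k
  have h2 : off m (k + 1) ≤ off m (d + 1) := off_mono m (by omega)
  omega

lemma blk_ge (hpos : ∀ l, l ≤ d → 1 ≤ m l) (hsum : off m (d + 1) = N)
    (c : ℕ) (p : Fin N) (hp : off m c ≤ (p : ℕ)) : c ≤ blockOf m (p : ℕ) := by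
  obtain ⟨hle, hP, hlt⟩ := blockOf_spec hpos (show (p:ℕ) < off m (d+1) by rw [hsum]; exact p.2)
  by_contra h
  push_neg at h
  have : off m (blockOf m (p:ℕ) + 1) ≤ off m c := off_mono m (by omega)
  omega

lemma blk_lt (hpos : ∀ l, l ≤ d → 1 ≤ m l) (hsum : off m (d + 1) = N)
    (c : ℕ) (p : Fin N) (hp : (p : ℕ) < off m c) : blockOf m (p : ℕ) < c := by
  obtain ⟨hle, hP, hlt⟩ := blockOf_spec hpos (show (p:ℕ) < off m (d+1) by rw [hsum]; exact p.2)
  by_contra h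
  push_neg at h
  have : off m c ≤ off m (blockOf m (p:ℕ)) := off_mono m h
  omega

lemma Mprod_inj (hrank : ∀ k', 1 ≤ k' → k' ≤ d → (sdBlock B m k').rank = m k') :
    ∀ k, k ≤ d → Function.Injective (Mprod B m k).mulVec := by
  intro k
  induction k with
  | zero =>
      intro _ u v huv
      simpa [Mprod, Matrix.one_mulVec] using huv
  | succ k IH =>
      intro hk u v huv
      have h2 : Function.Injective (sdBlock B m (k + 1)).mulVec :=
        inj_of_rank _ (hrank (k + 1) (by omega) hk)
      have h1 := IH (by omega)
      apply h2
      apply h1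
      simpa only [Mprod, Matrix.mulVec_mulVec] using huv

lemma step_main (hpos : ∀ l, l ≤ d → 1 ≤ m l) (hsum : off m (d + 1) = N)
    (hupper : ∀ i j : Fin N, blockOf m (i : ℕ) + 1 < blockOf m (j : ℕ) → B i j = 0) :
    ∀ k (hk : k ≤ d) (x : Fin N → ℝ), (∀ j : Fin N, (j : ℕ) < off m k → x j = 0) →
      ∀ (i : Fin N) (hi : (i : ℕ) < m 0),
      (B ^ k).mulVec x i =
        (Mprod B m k).mulVec
          (fun a : Fin (m k) => x ⟨off m k + (a : ℕ), off_add_lt hpos hsum hk a.2⟩)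
          ⟨(i : ℕ), hi⟩ := by
  intro k
  induction k with
  | zero =>
      intro hk x hx i hi
      simp only [pow_zero, Mprod, Matrix.one_mulVec]
      congr 1
      apply Fin.ext
      simp [off_zero]
  | succ k IH =>
      intro hk1 x hx i hi
      have hk : k ≤ d := by omega
      set y := B.mulVec x with hy_def
      have hy : ∀ j : Fin N, (j : ℕ) < off m k → y j = 0 := by
        intro j hj
        have hbj : blockOf m (j : ℕ) < k := blk_lt hpos hsum k j hj
        show (B.mulVec x) j = 0
        simp only [Matrix.mulVec, dotProduct]
        apply Finset.sum_eq_zero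
        intro p _
        by_cases hp : (p : ℕ) < off m (k + 1)
        · rw [hx p hp, mul_zero]
        · have hbp : k + 1 ≤ blockOf m (p : ℕ) := blk_ge hpos hsum (k + 1) p (by omega)
          rw [hupper j p (by omega), zero_mul]
      have hLHS : (B ^ (k + 1)).mulVec x i = (B ^ k).mulVec y i := by
        rw [pow_succ, hy_def, Matrix.mulVec_mulVec]
      rw [hLHS, IH hk y hy i hi]
      -- now rewrite the vector
      have hva : (fun a : Fin (m k) => y ⟨off m k + (a : ℕ), off_add_lt hpos hsum hk a.2⟩) =
          (sdBlock B m (k + 1)).mulVec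
            (fun b : Fin (m (k + 1)) => x ⟨off m (k + 1) + (b : ℕ),
              off_add_lt hpos hsum hk1 b.2⟩) := by
        funext a
        set j : Fin N := ⟨off m k + (a : ℕ), off_add_lt hpos hsum hk a.2⟩ with hj_def
        have hbj : blockOf m (j : ℕ) = k := by
          apply blockOf_eq hpos hk
          · exact Nat.le_add_right _ _
          · have := off_succ m k
            have := a.2
            simp only [hj_def]
            omega
        set emb : Fin (m (k + 1)) → Fin N :=
          fun b => ⟨off m (k + 1) + (b : ℕ), off_add_lt hpos hsum hk1 b.2⟩ with hemb
        have hembinj : Function.Injective emb := by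
          intro b1 b2 h
          apply Fin.ext
          have := congrArg (fun z : Fin N => (z : ℕ)) h
          simpa [hemb] using this
        have hsum_red : y j = ∑ b : Fin (m (k + 1)), B j (emb b) * x (emb b) := by
          show (B.mulVec x) j = _
          simp only [Matrix.mulVec, dotProduct]
          have hinj' : ∀ b1 ∈ Finset.univ, ∀ b2 ∈ Finset.univ, emb b1 = emb b2 → b1 = b2 :=
            fun b1 _ b2 _ h => hembinj h
          calc ∑ p : Fin N, B j p * x p
              = ∑ p ∈ Finset.univ.image emb, B j p * x p := ?_
            _ = ∑ b : Fin (m (k + 1)), B j (emb b) * x (emb b) :=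
                Finset.sum_image hinj'
          symm
          apply Finset.sum_subset (Finset.subset_univ _)
          intro p _ hpim
          by_cases hp1 : (p : ℕ) < off m (k + 1)
          · rw [hx p hp1, mul_zero]
          · by_cases hp2 : (p : ℕ) < off m (k + 2)
            · exfalso
              apply hpim
              rw [Finset.mem_image]
              have hee : off m (k + 2) = off m (k + 1) + m (k + 1) := off_succ m (k + 1)
              have hb : (p : ℕ) - off m (k + 1) < m (k + 1) := by omega
              refine ⟨⟨(p : ℕ) - off m (k + 1), hb⟩, Finset.mem_univ _, ?_⟩
              apply Fin.ext
              show off m (k + 1) + ((p : ℕ) - off m (k + 1)) = (p : ℕ)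
              omega
            · have hbp : k + 2 ≤ blockOf m (p : ℕ) := blk_ge hpos hsum (k + 2) p (by omega)
              rw [hupper j p (by omega), zero_mul]
        rw [hsum_red]
        show _ = ∑ b, sdBlock B m (k+1) a b * _
        apply Finset.sum_congr rfl
        intro b _
        congr 1
        show B j (emb b) = entry B (off m k + (a : ℕ)) (off m (k + 1) + (b : ℕ))
        rw [entry]
        rw [dif_pos (off_add_lt hpos hsum hk a.2), dif_pos (off_add_lt hpos hsum hk1 b.2)]
      rw [hva]
      show (Mprod B m k).mulVec _ _ = (Mprod B m k *
        (show Matrix (Fin (m k)) (Fin (m (k + 1))) ℝ from sdBlock B m (k + 1))).mulVec _ _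
      rw [← Matrix.mulVec_mulVec]

lemma H2_kernel (hpos : ∀ l, l ≤ d → 1 ≤ m l) (hsum : off m (d + 1) = N)
    (hupper : ∀ i j : Fin N, blockOf m (i : ℕ) + 1 < blockOf m (j : ℕ) → B i j = 0)
    (hrank : ∀ k', 1 ≤ k' → k' ≤ d → (sdBlock B m k').rank = m k')
    (x : Fin N → ℝ)
    (H : ∀ n : ℕ, ∀ i : Fin N, (i : ℕ) < m 0 → (B ^ n).mulVec x i = 0) : x = 0 := by
  suffices V : ∀ k, k ≤ d + 1 → ∀ j : Fin N, (j : ℕ) < off m k → x j = 0 by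
    funext j
    exact V (d + 1) le_rfl j (by rw [hsum]; exact j.2)
  intro k
  induction k with
  | zero => intro _ j hj; simp [off_zero] at hj
  | succ k IH =>
      intro hk1 j hj
      have hk : k ≤ d := by omega
      have hx : ∀ j : Fin N, (j : ℕ) < off m k → x j = 0 := IH (by omega)
      by_cases hjk : (j : ℕ) < off m k
      · exact hx j hjk
      · set w : Fin (m k) → ℝ :=
          fun a => x ⟨off m k + (a : ℕ), off_add_lt hpos hsum hk a.2⟩ with hw
        have hm0N : m 0 ≤ N := by
          have h1 : off m 1 ≤ off m (d + 1) := off_mono m (by omega)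
          have h2 : off m 1 = m 0 := by rw [off_succ, off_zero]; omega
          omega
        have hMw : (Mprod B m k).mulVec w = 0 := by
          funext i'
          have hstep := step_main hpos hsum hupper k hk x hx
            ⟨(i' : ℕ), lt_of_lt_of_le i'.2 hm0N⟩ i'.2
          have hH := H k ⟨(i' : ℕ), lt_of_lt_of_le i'.2 hm0N⟩ i'.2
          rw [hH] at hstep
          have : (⟨(i' : ℕ), i'.2⟩ : Fin (m 0)) = i' := by apply Fin.ext; rfl
          rw [this] at hstep
          exact hstep.symm
        have hw0 : w = 0 := Mprod_inj hrank k hk (by rw [hMw, Matrix.mulVec_zero])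
        have hj2 : (j : ℕ) - off m k < m k := by
          have := off_succ m k
          omega
        have hxj : x j = w ⟨(j : ℕ) - off m k, hj2⟩ := by
          rw [hw]
          congr 1
          apply Fin.ext
          simp
          omega
        rw [hxj, hw0]
        rfl

end Main


set_option maxHeartbeats 1000000

section Analysis

variable {N : ℕ}

lemma entry_hasDeriv (A C : Matrix (Fin N) (Fin N) ℝ) (x : Fin N → ℝ) (i : Fin N) (s : ℝ) :
    HasDerivAt (fun u : ℝ => ((NormedSpace.exp (u • A) * C).mulVec x) i)
      (((NormedSpace.exp (s • A) * (A * C)).mulVec x) i) s := by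
  letI : SeminormedRing (Matrix (Fin N) (Fin N) ℝ) := Matrix.linftyOpSemiNormedRing
  letI : NormedRing (Matrix (Fin N) (Fin N) ℝ) := Matrix.linftyOpNormedRing
  letI : NormedAlgebra ℝ (Matrix (Fin N) (Fin N) ℝ) := Matrix.linftyOpNormedAlgebra
  let L : Matrix (Fin N) (Fin N) ℝ →ₗ[ℝ] ℝ :=
    { toFun := fun M => ((M * C).mulVec x) i
      map_add' := by
        intro M1 M2
        simp [Matrix.add_mul, Matrix.add_mulVec]
      map_smul' := by
        intro c M
        simp [Matrix.smul_mul, Matrix.smul_mulVec] }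
  have hd := hasDerivAt_exp_smul_const (𝕂 := ℝ) A s
  have hL : HasFDerivAt (L.toContinuousLinearMap)
      (L.toContinuousLinearMap) (NormedSpace.exp (s • A)) :=
    L.toContinuousLinearMap.hasFDerivAt
  have hcomp := hL.comp_hasDerivAt s hd
  have : HasDerivAt (fun u : ℝ => L (NormedSpace.exp (u • A)))
      (L (NormedSpace.exp (s • A) * A)) s := hcomp
  simpa only [L, LinearMap.coe_mk, AddHom.coe_mk, Matrix.mul_assoc] using this

lemma cont_entry_exp (A : Matrix (Fin N) (Fin N) ℝ) (i j : Fin N) :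
    Continuous fun s : ℝ => NormedSpace.exp (s • A) i j := by
  have h : Continuous fun s : ℝ =>
      ((NormedSpace.exp (s • A) * 1).mulVec (Pi.single j 1)) i :=
    continuous_iff_continuousAt.2 fun s => (entry_hasDeriv A 1 (Pi.single j 1) i s).continuousAt
  have heq : (fun s : ℝ => ((NormedSpace.exp (s • A) * 1).mulVec (Pi.single j 1)) i) =
      fun s : ℝ => NormedSpace.exp (s • A) i j := by
    funext s
    simp [Matrix.mul_one, Matrix.mulVec_single]
  rwa [heq] at h

lemma Et_eq (B : Matrix (Fin N) (Fin N) ℝ) (s : ℝ) :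
    (Emat B s)ᵀ = NormedSpace.exp (s • (-B)) := by
  rw [Emat, ← Matrix.exp_transpose]
  congr 1
  rw [Matrix.transpose_smul, Matrix.transpose_transpose, neg_smul, smul_neg]

lemma Emat_eq (B : Matrix (Fin N) (Fin N) ℝ) (s : ℝ) :
    Emat B s = NormedSpace.exp (s • (-Bᵀ)) := by
  rw [Emat]
  congr 1
  rw [neg_smul, smul_neg]

end Analysis

/-- Under (H2), `C(t) = ∫₀ᵗ E(s) A₀ E(s)ᵀ ds` is symmetric
positive definite for every `t > 0`. -/
theorem Cmat_posDef
    (N m₀ d : ℕ) (m : ℕ → ℕ)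
    (hm₀ : 1 ≤ m₀) (hm₀N : m₀ ≤ N) (hm0 : m 0 = m₀)
    (B : Matrix (Fin N) (Fin N) ℝ) (hB2 : H2 d m B)
    (t : ℝ) (ht : 0 < t) :
    (Cmat m₀ B t).PosDef := by
  classical
  have hEcont : ∀ i j : Fin N, Continuous fun s : ℝ => Emat B s i j := by
    intro i j
    have h1 := cont_entry_exp (-Bᵀ) i j
    have h2 : (fun s : ℝ => NormedSpace.exp (s • (-Bᵀ)) i j) =
        fun s : ℝ => Emat B s i j := by
      funext s
      rw [Emat_eq]
    rwa [h2] at h1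
  have hgcont : ∀ i j : Fin N,
      Continuous fun s : ℝ => (Emat B s * A0 N m₀ * (Emat B s)ᵀ) i j := by
    intro i j
    simp only [Matrix.mul_apply, Matrix.transpose_apply]
    exact continuous_finset_sum _ fun q _ =>
      ((continuous_finset_sum _ fun p _ => (hEcont i p).mul continuous_const).mul (hEcont j q))
  have hgsymm : ∀ (s : ℝ) (i j : Fin N),
      (Emat B s * A0 N m₀ * (Emat B s)ᵀ) j i = (Emat B s * A0 N m₀ * (Emat B s)ᵀ) i j := by
    intro s i j
    have h : (Emat B s * A0 N m₀ * (Emat B s)ᵀ)ᵀ = Emat B s * A0 N m₀ * (Emat B s)ᵀ := by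
      rw [Matrix.transpose_mul, Matrix.transpose_mul, Matrix.transpose_transpose]
      rw [show (A0 N m₀)ᵀ = A0 N m₀ from Matrix.diagonal_transpose _]
      rw [Matrix.mul_assoc]
    calc (Emat B s * A0 N m₀ * (Emat B s)ᵀ) j i
        = (Emat B s * A0 N m₀ * (Emat B s)ᵀ)ᵀ i j := rfl
      _ = (Emat B s * A0 N m₀ * (Emat B s)ᵀ) i j := by rw [h]
  rw [Matrix.posDef_iff_dotProduct_mulVec]
  constructor
  · -- Hermitian
    ext i j
    rw [Matrix.conjTranspose_apply, star_trivial]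
    show (Cmat m₀ B t) j i = (Cmat m₀ B t) i j
    show (∫ s in (0:ℝ)..t, (Emat B s * A0 N m₀ * (Emat B s)ᵀ) j i)
        = ∫ s in (0:ℝ)..t, (Emat B s * A0 N m₀ * (Emat B s)ᵀ) i j
    exact intervalIntegral.integral_congr fun s _ => hgsymm s i j
  · intro x hx
    rw [show star x = x from funext fun i => star_trivial _]
    set v : ℝ → Fin N → ℝ := fun s => (Emat B s)ᵀ.mulVec x with hv_def
    set f : ℝ → ℝ := fun s =>
      dotProduct x ((Emat B s * A0 N m₀ * (Emat B s)ᵀ).mulVec x) with hf_def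
    have hf_expand : ∀ s, f s =
        ∑ i, ∑ j, x i * ((Emat B s * A0 N m₀ * (Emat B s)ᵀ) i j * x j) := by
      intro s
      simp [hf_def, dotProduct, Matrix.mulVec, Finset.mul_sum]
    have hf_cont : Continuous f := by
      have h1 : Continuous fun s : ℝ =>
          ∑ i, ∑ j, x i * ((Emat B s * A0 N m₀ * (Emat B s)ᵀ) i j * x j) :=
        continuous_finset_sum _ fun i _ => continuous_finset_sum _ fun j _ =>
          (continuous_const.mul ((hgcont i j).mul continuous_const))
      rwa [show f = fun s => ∑ i, ∑ j, x i * ((Emat B s * A0 N m₀ * (Emat B s)ᵀ) i j * x j)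
        from funext hf_expand]
    have hf_eq : ∀ s, f s = ∑ i : Fin N, if (i : ℕ) < m₀ then v s i ^ 2 else 0 := by
      intro s
      have h1 : f s = dotProduct (v s) ((A0 N m₀).mulVec (v s)) := by
        simp only [hf_def, hv_def]
        rw [Matrix.mul_assoc, ← Matrix.mulVec_mulVec, ← Matrix.mulVec_mulVec,
          dotProduct_mulVec, ← Matrix.mulVec_transpose]
      rw [h1]
      rw [show (A0 N m₀) = Matrix.diagonal (fun i : Fin N => if (i : ℕ) < m₀ then (1:ℝ) else 0)
        from rfl]
      simp only [dotProduct, Matrix.mulVec_diagonal]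
      refine Finset.sum_congr rfl fun i _ => ?_
      by_cases hi : (i : ℕ) < m₀
      · simp only [hi, if_true, one_mul, sq]
      · simp [hi]
    have hfnn : ∀ s, 0 ≤ f s := by
      intro s
      rw [hf_eq]
      refine Finset.sum_nonneg fun i _ => ?_
      by_cases hi : (i : ℕ) < m₀ <;> simp [hi, sq_nonneg]
    have hquad : dotProduct x ((Cmat m₀ B t).mulVec x) = ∫ s in (0:ℝ)..t, f s := by
      have h1 : dotProduct x ((Cmat m₀ B t).mulVec x) =
          ∑ i, ∑ j, x i * ((∫ s in (0:ℝ)..t, (Emat B s * A0 N m₀ * (Emat B s)ᵀ) i j) * x j) := by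
        simp [Cmat, dotProduct, Matrix.mulVec, Finset.mul_sum]
      rw [h1]
      have hii : ∀ i j : Fin N, IntervalIntegrable
          (fun s => x i * ((Emat B s * A0 N m₀ * (Emat B s)ᵀ) i j * x j)) volume 0 t :=
        fun i j => (continuous_const.mul ((hgcont i j).mul continuous_const)).intervalIntegrable 0 t
      have h2 : ∀ i j : Fin N,
          x i * ((∫ s in (0:ℝ)..t, (Emat B s * A0 N m₀ * (Emat B s)ᵀ) i j) * x j) =
          ∫ s in (0:ℝ)..t, x i * ((Emat B s * A0 N m₀ * (Emat B s)ᵀ) i j * x j) := by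
        intro i j
        rw [← intervalIntegral.integral_mul_const, ← intervalIntegral.integral_const_mul]
      calc ∑ i, ∑ j, x i * ((∫ s in (0:ℝ)..t, (Emat B s * A0 N m₀ * (Emat B s)ᵀ) i j) * x j)
          = ∑ i, ∫ s in (0:ℝ)..t,
              ∑ j, x i * ((Emat B s * A0 N m₀ * (Emat B s)ᵀ) i j * x j) := by
            refine Finset.sum_congr rfl fun i _ => ?_
            calc ∑ j, x i * ((∫ s in (0:ℝ)..t, (Emat B s * A0 N m₀ * (Emat B s)ᵀ) i j) * x j)
                = ∑ j, ∫ s in (0:ℝ)..t,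
                    x i * ((Emat B s * A0 N m₀ * (Emat B s)ᵀ) i j * x j) :=
                  Finset.sum_congr rfl fun j _ => h2 i j
              _ = ∫ s in (0:ℝ)..t,
                    ∑ j, x i * ((Emat B s * A0 N m₀ * (Emat B s)ᵀ) i j * x j) :=
                  (intervalIntegral.integral_finset_sum (fun j _ => hii i j)).symm
        _ = ∫ s in (0:ℝ)..t,
              ∑ i, ∑ j, x i * ((Emat B s * A0 N m₀ * (Emat B s)ᵀ) i j * x j) :=
            (intervalIntegral.integral_finset_sum (fun i _ =>
              ((continuous_finset_sum _ fun j _ => continuous_const.mul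
                ((hgcont i j).mul continuous_const)).intervalIntegrable 0 t))).symm
        _ = ∫ s in (0:ℝ)..t, f s := by
            refine intervalIntegral.integral_congr fun s _ => ?_
            rw [hf_expand s]
    rw [hquad]
    have hex : ∃ s₀ ∈ Set.Ico (0:ℝ) t, f s₀ ≠ 0 := by
      by_contra hcon
      push_neg at hcon
      have hv0 : ∀ s ∈ Set.Ico (0:ℝ) t, ∀ i : Fin N, (i : ℕ) < m₀ → v s i = 0 := by
        intro s hs i hi
        have h0 := hcon s hs
        rw [hf_eq] at h0
        have h1 := (Finset.sum_eq_zero_iff_of_nonneg (fun i _ => by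
          by_cases hi' : ((i : Fin N) : ℕ) < m₀ <;> simp [hi', sq_nonneg])).1 h0 i
          (Finset.mem_univ _)
        rw [if_pos hi] at h1
        exact (pow_eq_zero_iff (two_ne_zero)).1 h1
      have hvA : ∀ s, v s = (NormedSpace.exp (s • (-B))).mulVec x := by
        intro s
        simp only [hv_def]
        rw [Et_eq]
      have hH : ∀ n : ℕ, ∀ i : Fin N, (i : ℕ) < m 0 → (B ^ n).mulVec x i = 0 := by
        intro n i hi
        have hi' : (i : ℕ) < m₀ := by rwa [hm0] at hi
        have hF : ∀ n : ℕ, ∀ s ∈ Set.Ico (0:ℝ) t,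
            ((NormedSpace.exp (s • (-B)) * (-B) ^ n).mulVec x) i = 0 := by
          intro n
          induction n with
          | zero =>
              intro s hs
              have h0 := hv0 s hs i hi'
              rw [hvA] at h0
              simpa [pow_zero, Matrix.mul_one] using h0
          | succ n IHn =>
              intro s hs
              have hder := entry_hasDeriv (-B) ((-B) ^ n) x i s
              have hps : (-B) * (-B) ^ n = (-B) ^ (n + 1) := (pow_succ' (-B) n).symm
              rw [hps] at hder
              have h1 : HasDerivWithinAt
                  (fun u : ℝ => ((NormedSpace.exp (u • (-B)) * (-B) ^ n).mulVec x) i)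
                  (((NormedSpace.exp (s • (-B)) * (-B) ^ (n + 1)).mulVec x) i)
                  (Set.Ici s) s := hder.hasDerivWithinAt
              have hmem : Set.Ici s ∩ Set.Iio t ∈ nhdsWithin s (Set.Ici s) :=
                Filter.inter_mem self_mem_nhdsWithin
                  (mem_nhdsWithin_of_mem_nhds (Iio_mem_nhds hs.2))
              have heq : (fun u : ℝ => ((NormedSpace.exp (u • (-B)) * (-B) ^ n).mulVec x) i)
                  =ᶠ[nhdsWithin s (Set.Ici s)] fun _ => (0:ℝ) :=
                Filter.eventuallyEq_of_mem hmem fun u hu =>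
                  IHn u ⟨le_trans hs.1 hu.1, hu.2⟩
              have h2 : HasDerivWithinAt
                  (fun u : ℝ => ((NormedSpace.exp (u • (-B)) * (-B) ^ n).mulVec x) i)
                  0 (Set.Ici s) s :=
                (hasDerivWithinAt_const s _ (0:ℝ)).congr_of_eventuallyEq heq (IHn s hs)
              have hud : UniqueDiffWithinAt ℝ (Set.Ici s) s :=
                uniqueDiffOn_Ici s s Set.self_mem_Ici
              have e1 := h1.derivWithin hud
              have e2 := h2.derivWithin hud
              rw [← e1, e2]
        have h0 := hF n 0 ⟨le_rfl, ht⟩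
        rw [zero_smul, NormedSpace.exp_zero, one_mul] at h0
        have hnb : (-B : Matrix (Fin N) (Fin N) ℝ) ^ n = ((-1:ℝ) ^ n) • B ^ n := by
          rw [show (-B : Matrix (Fin N) (Fin N) ℝ) = (-1:ℝ) • B from (neg_one_smul ℝ B).symm,
            smul_pow]
        rw [hnb, Matrix.smul_mulVec, Pi.smul_apply, smul_eq_mul] at h0
        rcases mul_eq_zero.1 h0 with h | h
        · exact absurd h (pow_ne_zero n (by norm_num))
        · exact h
      exact hx (H2_kernel hB2.m_pos hB2.m_sum hB2.upper_zero hB2.rank_sd x hH)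
    obtain ⟨s₀, hs₀, hfs₀⟩ := hex
    have hfpos : 0 < f s₀ := lt_of_le_of_ne (hfnn s₀) (Ne.symm hfs₀)
    rw [intervalIntegral.integral_of_le ht.le]
    have hU : IsOpen (f ⁻¹' Set.Ioi (0:ℝ)) := isOpen_Ioi.preimage hf_cont
    obtain ⟨ε, hε, hball⟩ := Metric.isOpen_iff.1 hU s₀ hfpos
    have hsb : s₀ < min (s₀ + ε) t := lt_min (by linarith) hs₀.2
    have hsub : Set.Ioo s₀ (min (s₀ + ε) t) ⊆ Function.support f ∩ Set.Ioc 0 t := by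
      intro u hu
      refine ⟨?_, lt_of_le_of_lt hs₀.1 hu.1, le_trans hu.2.le (min_le_right _ _)⟩
      have hub : u ∈ Metric.ball s₀ ε := by
        rw [Metric.mem_ball, Real.dist_eq, abs_lt]
        have hu1 := hu.1
        have hu2 : u < s₀ + ε := lt_of_lt_of_le hu.2 (min_le_left _ _)
        constructor <;> linarith
      exact ne_of_gt (hball hub)
    refine (MeasureTheory.setIntegral_pos_iff_support_of_nonneg_ae ?_ ?_).2 ?_
    · exact Filter.Eventually.of_forall hfnn
    · exact hf_cont.integrableOn_Ioc
    · calc (0:ℝ≥0∞) < volume (Set.Ioo s₀ (min (s₀ + ε) t)) := by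
            rw [Real.volume_Ioo]
            exact ENNReal.ofReal_pos.2 (by linarith)
        _ ≤ volume (Function.support f ∩ Set.Ioc 0 t) := measure_mono hsub
end
end

section
/- Let B₀ be the N×N matrix having exactly the block-superdiagonal blocks B₁, …, B_d (B_k of size m_{k−1}×m_k and rank m_k) and zeros in every other block, let E₀(s) = exp(−sB₀ᵀ), A₀ = diag(I_{m₀},0), and C₀(t) = ∫₀ᵗ E₀(s) A₀ E₀(s)ᵀ ds. Then for every t > 0: C₀(t) = D_{t^{1/2}} C₀(1) D_{t^{1/2}}, where D_s = diag(s I_{m₀}, s³ I_{m₁}, …, s^{2d+1} I_{m_d}). -/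
open MeasureTheory Matrix Real Filter Topology
open scoped ENNReal NNReal

noncomputable section

open Ultra

namespace Ultra

variable {N m₀ : ℕ}

lemma blockOf_eq_zero {m : ℕ → ℕ} {i : ℕ} (h : i < m 0) : blockOf m i = 0 := by
  rw [blockOf, Nat.findGreatest_eq_zero_iff]
  intro k hk hki hoff
  have : m 0 ≤ off m k := Finset.single_le_sum (f := m) (fun _ _ => Nat.zero_le _)
    (Finset.mem_range.mpr hk)
  omega

lemma alphaExp_eq_one {m : ℕ → ℕ} {i : ℕ} (h : i < m 0) : alphaExp m i = 1 := by
  rw [alphaExp, blockOf_eq_zero h]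

lemma dil_A0_dil {m : ℕ → ℕ} (hm0N : m 0 = m₀) (c : ℝ) :
    dilMat (N := N) m c * A0 N m₀ * dilMat m c = (c ^ 2) • A0 N m₀ := by
  ext i j
  simp only [dilMat, A0, Matrix.diagonal_mul_diagonal, Matrix.smul_apply, Matrix.diagonal_apply]
  split_ifs with h h1
  · have ha := alphaExp_eq_one (m := m) (i := (i : ℕ)) (by omega)
    rw [ha, smul_eq_mul]; ring
  · simp
  · simp

lemma dil_mul_Bt {m : ℕ → ℕ} {B₀ : Matrix (Fin N) (Fin N) ℝ}
    (hB₀ : ∀ i j : Fin N, blockOf m (j : ℕ) ≠ blockOf m (i : ℕ) + 1 → B₀ i j = 0) (c : ℝ) :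
    dilMat m c * B₀ᵀ = (c ^ 2) • (B₀ᵀ * dilMat m c) := by
  ext i j
  simp only [dilMat, Matrix.diagonal_mul, Matrix.mul_diagonal, Matrix.smul_apply,
    Matrix.transpose_apply, smul_eq_mul]
  by_cases h : blockOf m (i : ℕ) = blockOf m (j : ℕ) + 1
  · have : alphaExp m (i : ℕ) = alphaExp m (j : ℕ) + 2 := by rw [alphaExp, alphaExp, h]; ring
    rw [this, pow_add]; ring
  · rw [hB₀ j i h]; ring


lemma dil_mul_dil_inv {m : ℕ → ℕ} {c : ℝ} (hc : c ≠ 0) :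
    dilMat (N := N) m c * dilMat m c⁻¹ = 1 := by
  rw [dilMat, dilMat, Matrix.diagonal_mul_diagonal]
  convert Matrix.diagonal_one with i
  rw [← mul_pow, mul_inv_cancel₀ hc, one_pow]

lemma isUnit_dil {m : ℕ → ℕ} {c : ℝ} (hc : c ≠ 0) : IsUnit (dilMat (N := N) m c) := by
  have h1 := dil_mul_dil_inv (N := N) (m := m) hc
  have h2 := dil_mul_dil_inv (N := N) (m := m) (inv_ne_zero hc)
  rw [inv_inv] at h2
  exact ⟨⟨_, _, h1, h2⟩, rfl⟩

lemma dil_inv {m : ℕ → ℕ} {c : ℝ} (hc : c ≠ 0) :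
    (dilMat (N := N) m c)⁻¹ = dilMat m c⁻¹ :=
  Matrix.inv_eq_right_inv (dil_mul_dil_inv hc)

lemma Emat_scale {m : ℕ → ℕ} {B₀ : Matrix (Fin N) (Fin N) ℝ}
    (hB₀ : ∀ i j : Fin N, blockOf m (j : ℕ) ≠ blockOf m (i : ℕ) + 1 → B₀ i j = 0)
    {c : ℝ} (hc : c ≠ 0) (s : ℝ) :
    Emat B₀ (c ^ 2 * s) = dilMat m c * Emat B₀ s * dilMat m c⁻¹ := by
  have key : (-(c ^ 2 * s)) • B₀ᵀ =
      dilMat m c * ((-s) • B₀ᵀ) * (dilMat m c)⁻¹ := by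
    rw [dil_inv hc, Matrix.mul_smul, Matrix.smul_mul, Matrix.mul_assoc,
      ← Matrix.mul_assoc, dil_mul_Bt hB₀, Matrix.smul_mul, Matrix.mul_assoc,
      dil_mul_dil_inv hc, Matrix.mul_one, smul_smul]
    congr 1; ring
  rw [Emat, key, Matrix.exp_conj _ _ (isUnit_dil hc), dil_inv hc, Emat]


end Ultra

/-- Homogeneity of `C₀(t)` for the principal part `B₀`:
`C₀(t) = D_{√t} C₀(1) D_{√t}` for all `t > 0`. -/
theorem Cmat_homogeneity
    (N m₀ d : ℕ) (m : ℕ → ℕ)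
    (hm₀ : 1 ≤ m₀) (hm₀N : m₀ ≤ N) (hm0 : m 0 = m₀)
    (B₀ : Matrix (Fin N) (Fin N) ℝ) (hB2 : H2 d m B₀)
    (hB₀ : ∀ i j : Fin N, blockOf m (j : ℕ) ≠ blockOf m (i : ℕ) + 1 → B₀ i j = 0)
    (t : ℝ) (ht : 0 < t) :
    Cmat m₀ B₀ t = dilMat m (Real.sqrt t) * Cmat m₀ B₀ 1 * dilMat m (Real.sqrt t) := by
  set c : ℝ := Real.sqrt t with hcdef
  have hc : c ≠ 0 := ne_of_gt (Real.sqrt_pos.mpr ht)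
  have hc2 : c ^ 2 = t := Real.sq_sqrt ht.le
  set M : ℝ → Matrix (Fin N) (Fin N) ℝ :=
    fun s => Emat B₀ s * A0 N m₀ * (Emat B₀ s)ᵀ with hM
  -- matrix identity: M (t * s) = t⁻¹ • (D * M s * D)
  have hMs : ∀ s : ℝ, M (t * s) = t⁻¹ • (dilMat m c * M s * dilMat m c) := by
    intro s
    have h1 : Emat B₀ (t * s) = dilMat m c * Emat B₀ s * dilMat m c⁻¹ := by
      rw [← hc2]; exact Emat_scale hB₀ hc s
    have h2 : (Emat B₀ (t * s))ᵀ = dilMat m c⁻¹ * (Emat B₀ s)ᵀ * dilMat m c := by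
      rw [h1]
      simp only [Matrix.transpose_mul, dilMat, Matrix.diagonal_transpose, Matrix.mul_assoc]
    have hA : dilMat (N := N) m c⁻¹ * A0 N m₀ * dilMat m c⁻¹ = (c⁻¹ ^ 2) • A0 N m₀ :=
      dil_A0_dil hm0 c⁻¹
    have : M (t * s)
        = dilMat m c * (Emat B₀ s * ((dilMat m c⁻¹ * A0 N m₀ * dilMat m c⁻¹) *
            ((Emat B₀ s)ᵀ * dilMat m c))) := by
      simp only [hM]
      rw [h2, h1]
      simp only [Matrix.mul_assoc]
    rw [this, hA, Matrix.smul_mul, Matrix.mul_smul, Matrix.mul_smul, inv_pow, hc2]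
    simp only [hM, Matrix.mul_assoc]
  ext i j
  have hDij : ∀ A : Matrix (Fin N) (Fin N) ℝ,
      (dilMat (N := N) m c * A * dilMat (N := N) m c) i j
        = c ^ alphaExp m (i : ℕ) * A i j * c ^ alphaExp m (j : ℕ) := by
    intro A
    simp only [dilMat, Matrix.mul_diagonal, Matrix.diagonal_mul]
  -- left side
  show (∫ u in (0:ℝ)..t, M u i j) = _
  have hsub : (∫ s in (0:ℝ)..1, M (t * s) i j) = t⁻¹ • ∫ u in (0:ℝ)..t, M u i j := by
    have := intervalIntegral.integral_comp_mul_left (fun u => M u i j) (ne_of_gt ht)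
      (a := 0) (b := 1)
    simpa using this
  have hL : (∫ u in (0:ℝ)..t, M u i j) = t * ∫ s in (0:ℝ)..1, M (t * s) i j := by
    rw [hsub, smul_eq_mul, ← mul_assoc, mul_inv_cancel₀ (ne_of_gt ht), one_mul]
  rw [hL]
  have : ∀ s : ℝ, M (t * s) i j
      = c ^ alphaExp m (i : ℕ) * M s i j * c ^ alphaExp m (j : ℕ) * t⁻¹ := by
    intro s
    rw [hMs s, Matrix.smul_apply, hDij, smul_eq_mul]; ring
  rw [intervalIntegral.integral_congr (fun s _ => this s)]
  rw [intervalIntegral.integral_mul_const, intervalIntegral.integral_mul_const,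
    intervalIntegral.integral_const_mul]
  rw [hDij (Cmat m₀ B₀ 1)]
  show _ = c ^ alphaExp m (i : ℕ) * (∫ s in (0:ℝ)..1, M s i j) * c ^ alphaExp m (j : ℕ)
  field_simp
end
end
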